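/- arXiv:1810.04316 — 4 statements merged into one kernel-verified Lean document; each statement's English description precedes it below -/
import Mathlib

section
/- Let f : ℝⁿ → ℝ be convex and differentiable with gradient f′, and suppose f(y) ≤ f(x) + ⟨f′(x), y - x⟩ + (L/2)‖x - y‖² for all x, y. Then f(x) + ⟨f′(x), y - x⟩ + (1/(2L))‖f′(x) - f′(y)‖² ≤ f(y) for all x, y ∈ ℝⁿ. -/
/-!
Evaluate `f` at the gradient step `z = y - L⁻¹ (f' y - f' x)`: convexity at `x` bounds `f z` from
below, the quadratic upper bound at `y` bounds it from above, and in the comparison the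
inner-product terms combine to `L⁻¹ ‖f' x - f' y‖²`, of which the step's cost `(2L)⁻¹ ‖f' x - f' y‖²`
leaves half.
-/

section

variable {E : Type*} [NormedAddCommGroup E] [InnerProductSpace ℝ E] {f : E → ℝ} {f' : E → E}

lemma add_inner_sub_mul_inner_le_apply_sub_smul
    (hconv : ∀ x y, f x + inner ℝ (f' x) (y - x) ≤ f y) (x y v : E) (c : ℝ) :
    f x + inner ℝ (f' x) (y - x) - c * inner ℝ (f' x) v ≤ f (y - c • v) := by
  have h := hconv x (y - c • v)
  rwa [sub_right_comm, inner_sub_right, real_inner_smul_right, ← add_sub_assoc] at h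

lemma apply_sub_smul_le_of_quadratic_upper_bound {L : ℝ} (hL : 0 < L)
    (hsmooth : ∀ x y, f y ≤ f x + inner ℝ (f' x) (y - x) + L / 2 * ‖x - y‖ ^ 2) (y v : E) :
    f (y - L⁻¹ • v) ≤ f y - L⁻¹ * inner ℝ (f' y) v + (2 * L)⁻¹ * ‖v‖ ^ 2 := by
  have h := hsmooth y (y - L⁻¹ • v)
  have hstep : ‖y - (y - L⁻¹ • v)‖ ^ 2 = L⁻¹ ^ 2 * ‖v‖ ^ 2 := by
    rw [sub_sub_cancel, norm_smul, Real.norm_of_nonneg (inv_nonneg.mpr hL.le), mul_pow]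
  rw [sub_sub_cancel_left, inner_neg_right, real_inner_smul_right, hstep] at h
  calc f (y - L⁻¹ • v)
      ≤ f y + -(L⁻¹ * inner ℝ (f' y) v) + L / 2 * (L⁻¹ ^ 2 * ‖v‖ ^ 2) := h
    _ = f y - L⁻¹ * inner ℝ (f' y) v + (2 * L)⁻¹ * ‖v‖ ^ 2 := by
      field_simp
      ring

theorem add_inner_add_norm_sub_sq_le_of_quadratic_upper_bound {L : ℝ} (hL : 0 < L)
    (hconv : ∀ x y, f x + inner ℝ (f' x) (y - x) ≤ f y)
    (hsmooth : ∀ x y, f y ≤ f x + inner ℝ (f' x) (y - x) + L / 2 * ‖x - y‖ ^ 2) (x y : E) :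
    f x + inner ℝ (f' x) (y - x) + 1 / (2 * L) * ‖f' x - f' y‖ ^ 2 ≤ f y := by
  set v := f' y - f' x
  have hlower := add_inner_sub_mul_inner_le_apply_sub_smul hconv x y v L⁻¹
  have hupper := apply_sub_smul_le_of_quadratic_upper_bound hL hsmooth y v
  have hv : inner ℝ (f' y) v - inner ℝ (f' x) v = ‖v‖ ^ 2 := by
    rw [← inner_sub_left, real_inner_self_eq_norm_sq]
  have hgap : L⁻¹ * (inner ℝ (f' y) v - inner ℝ (f' x) v) - (2 * L)⁻¹ * ‖v‖ ^ 2
      = 1 / (2 * L) * ‖f' x - f' y‖ ^ 2 := by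
    rw [hv, norm_sub_rev]
    field_simp
    ring
  linarith

end

theorem ineq1_implies_ineq2_general (n : ℕ)
    (f : EuclideanSpace ℝ (Fin n) → ℝ) (f' : EuclideanSpace ℝ (Fin n) → EuclideanSpace ℝ (Fin n))
    (L : ℝ) (hL : 0 < L)
    (hconv : ∀ x y, f x + inner ℝ (f' x) (y - x) ≤ f y)
    (h1 : ∀ x y, f y ≤ f x + inner ℝ (f' x) (y - x) + L / 2 * ‖x - y‖ ^ 2) :
    ∀ x y : EuclideanSpace ℝ (Fin n),
      f x + inner ℝ (f' x) (y - x) + 1 / (2 * L) * ‖f' x - f' y‖ ^ 2 ≤ f y :=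
  add_inner_add_norm_sub_sq_le_of_quadratic_upper_bound hL hconv h1

theorem ineq1_implies_ineq2 (n : ℕ)
    (f : EuclideanSpace ℝ (Fin n) → ℝ) (f' : EuclideanSpace ℝ (Fin n) → EuclideanSpace ℝ (Fin n))
    (L : ℝ) (hL : 0 < L)
    (hdiff : ∀ x, HasGradientAt f (f' x) x)
    (hconv : ∀ x y, f x + inner ℝ (f' x) (y - x) ≤ f y)
    (h1 : ∀ x y, f y ≤ f x + inner ℝ (f' x) (y - x) + L / 2 * ‖x - y‖ ^ 2) :
    ∀ x y : EuclideanSpace ℝ (Fin n),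
      f x + inner ℝ (f' x) (y - x) + 1 / (2 * L) * ‖f' x - f' y‖ ^ 2 ≤ f y :=
  ineq1_implies_ineq2_general n f f' L hL hconv h1
end

section
/- Let f : ℝⁿ → ℝ be continuous and differentiable with gradient f′, and suppose α f(x) + (1-α) f(y) ≤ f(αx + (1-α)y) + α(1-α)(L/2)‖x - y‖² for all x, y ∈ ℝⁿ and α ∈ [0,1]. Then f(y) ≤ f(x) + ⟨f′(x), y - x⟩ + (L/2)‖x - y‖² for all x, y ∈ ℝⁿ. -/
/-!
Restricted to the segment from `x` to `y`, the hypothesis divided by `α` reads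
`f y - f x ≤ (f (x + α (y - x)) - f x) / α + (1 - α) C`; as `α → 0⁺` the difference quotient
tends to the directional derivative `⟪f' x, y - x⟫`.
-/

open Filter Set Topology

theorem le_add_deriv_add_of_concave_defect {g : ℝ → ℝ} {g' C : ℝ}
    (hg : HasDerivWithinAt g g' (Ioi 0) 0)
    (hconc : ∀ α ∈ Ioc (0 : ℝ) 1, α * g 1 + (1 - α) * g 0 ≤ g α + α * (1 - α) * C) :
    g 1 ≤ g 0 + g' + C := by
  have hslope : Tendsto (slope g 0) (𝓝[>] 0) (𝓝 g') :=
    (hasDerivWithinAt_iff_tendsto_slope' self_notMem_Ioi).mp hg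
  have hdefect : Tendsto (fun α : ℝ => (1 - α) * C) (𝓝[>] 0) (𝓝 C) := by
    have : Continuous fun α : ℝ => (1 - α) * C := by fun_prop
    simpa using this.continuousWithinAt.tendsto (x := 0) (s := Ioi 0)
  have hbound : ∀ᶠ α in 𝓝[>] (0 : ℝ), g 1 - g 0 ≤ slope g 0 α + (1 - α) * C := by
    filter_upwards [Ioc_mem_nhdsGT zero_lt_one] with α hα
    have hα0 := hα.1
    rw [slope_def_field, sub_zero, div_add' _ _ _ hα0.ne', le_div_iff₀ hα0]
    nlinarith [hconc α hα]
  linarith [ge_of_tendsto (hslope.add hdefect) hbound]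

theorem le_add_fderiv_add_of_concave_defect {E : Type*} [NormedAddCommGroup E] [NormedSpace ℝ E]
    {f : E → ℝ} {φ : E →L[ℝ] ℝ} {x y : E} {C : ℝ} (hf : HasFDerivAt f φ x)
    (hconc : ∀ α ∈ Ioc (0 : ℝ) 1,
      α * f y + (1 - α) * f x ≤ f (α • y + (1 - α) • x) + α * (1 - α) * C) :
    f y ≤ f x + φ (y - x) + C := by
  have hline : HasDerivWithinAt (f ∘ AffineMap.lineMap (k := ℝ) x y) (φ (y - x)) (Ioi 0) 0 := by
    refine (HasFDerivAt.comp_hasDerivAt (0 : ℝ) ?_ AffineMap.hasDerivAt_lineMap).hasDerivWithinAt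
    simpa using hf
  have hℓ : ∀ α : ℝ, AffineMap.lineMap x y α = α • y + (1 - α) • x := fun α => by
    rw [AffineMap.lineMap_apply_module, add_comm]
  have key := le_add_deriv_add_of_concave_defect hline fun α hα => by
    simpa [hℓ] using hconc α hα
  simpa [hℓ] using key

theorem ineq6_implies_ineq1_general (n : ℕ)
    (f : EuclideanSpace ℝ (Fin n) → ℝ) (f' : EuclideanSpace ℝ (Fin n) → EuclideanSpace ℝ (Fin n))
    (L : ℝ)
    (hdiff : ∀ x, HasGradientAt f (f' x) x)
    (h6 : ∀ x y : EuclideanSpace ℝ (Fin n), ∀ α : ℝ, 0 ≤ α → α ≤ 1 →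
      α * f x + (1 - α) * f y
        ≤ f (α • x + (1 - α) • y) + α * (1 - α) * (L / 2) * ‖x - y‖ ^ 2) :
    ∀ x y : EuclideanSpace ℝ (Fin n),
      f y ≤ f x + inner ℝ (f' x) (y - x) + L / 2 * ‖x - y‖ ^ 2 := by
  intro x y
  have hconc : ∀ α ∈ Ioc (0 : ℝ) 1, α * f y + (1 - α) * f x
      ≤ f (α • y + (1 - α) • x) + α * (1 - α) * (L / 2 * ‖x - y‖ ^ 2) := fun α hα => by
    simpa [norm_sub_rev, mul_assoc] using h6 y x α hα.1.le hα.2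
  simpa using le_add_fderiv_add_of_concave_defect (hdiff x).hasFDerivAt hconc

theorem ineq6_implies_ineq1 (n : ℕ)
    (f : EuclideanSpace ℝ (Fin n) → ℝ) (f' : EuclideanSpace ℝ (Fin n) → EuclideanSpace ℝ (Fin n))
    (L : ℝ) (hL : 0 < L)
    (hcont : Continuous f)
    (hdiff : ∀ x, HasGradientAt f (f' x) x)
    (h6 : ∀ x y : EuclideanSpace ℝ (Fin n), ∀ α : ℝ, 0 ≤ α → α ≤ 1 →
      α * f x + (1 - α) * f y
        ≤ f (α • x + (1 - α) • y) + α * (1 - α) * (L / 2) * ‖x - y‖ ^ 2) :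
    ∀ x y : EuclideanSpace ℝ (Fin n),
      f y ≤ f x + inner ℝ (f' x) (y - x) + L / 2 * ‖x - y‖ ^ 2 :=
  ineq6_implies_ineq1_general n f f' L hdiff h6
end

section
/- Let f : ℝⁿ → ℝ be differentiable with gradient f′ satisfying f(x) + ⟨f′(x), y - x⟩ + (1/(2L))‖f′(x) - f′(y)‖² ≤ f(y) for all x, y. Then for all x, y ∈ ℝⁿ and α ∈ [0,1]: f(αx + (1-α)y) + (α(1-α)/(2L))‖f′(x) - f′(y)‖² ≤ α f(x) + (1-α) f(y). -/
/-!
Cocoercivity at the single point `z = α • x + (1 - α) • y`, tested against `x` and against `y`,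
and averaged with weights `α` and `1 - α`: the first-order terms cancel because
`α • (x - z) + (1 - α) • (y - z) = 0`, and the gradient gaps `u = f' x - f' z`, `v = f' y - f' z`
control `f' x - f' y = u - v` because `α ‖u‖² + (1 - α) ‖v‖² - α (1 - α) ‖u - v‖²` is the square
norm `‖α • u + (1 - α) • v‖²`, hence nonnegative.
-/

section InnerProductSpace

variable {E : Type*} [NormedAddCommGroup E] [InnerProductSpace ℝ E]

theorem norm_smul_add_one_sub_smul_sq (α : ℝ) (u v : E) :
    ‖α • u + (1 - α) • v‖ ^ 2 = α * ‖u‖ ^ 2 + (1 - α) * ‖v‖ ^ 2 - α * (1 - α) * ‖u - v‖ ^ 2 := by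
  rw [norm_add_sq_real, norm_sub_sq_real, real_inner_smul_left, real_inner_smul_right,
    norm_smul, norm_smul, mul_pow, mul_pow, Real.norm_eq_abs, Real.norm_eq_abs, sq_abs, sq_abs]
  ring

theorem mul_one_sub_mul_norm_sub_sq_le (α : ℝ) (u v : E) :
    α * (1 - α) * ‖u - v‖ ^ 2 ≤ α * ‖u‖ ^ 2 + (1 - α) * ‖v‖ ^ 2 := by
  have := norm_smul_add_one_sub_smul_sq α u v
  nlinarith [sq_nonneg ‖α • u + (1 - α) • v‖]

theorem mul_inner_sub_add_mul_inner_sub_eq_zero (α : ℝ) (g x y : E) :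
    α * inner ℝ g (x - (α • x + (1 - α) • y)) + (1 - α) * inner ℝ g (y - (α • x + (1 - α) • y))
      = 0 := by
  rw [← real_inner_smul_right, ← real_inner_smul_right, ← inner_add_right]
  convert inner_zero_right g using 2
  module

end InnerProductSpace

theorem ineq2_implies_ineq5_general (n : ℕ)
    (f : EuclideanSpace ℝ (Fin n) → ℝ) (f' : EuclideanSpace ℝ (Fin n) → EuclideanSpace ℝ (Fin n))
    (L : ℝ) (hL : 0 < L)
    (h2 : ∀ x y, f x + inner ℝ (f' x) (y - x) + 1 / (2 * L) * ‖f' x - f' y‖ ^ 2 ≤ f y) :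
    ∀ x y : EuclideanSpace ℝ (Fin n), ∀ α : ℝ, 0 ≤ α → α ≤ 1 →
      f (α • x + (1 - α) • y) + α * (1 - α) / (2 * L) * ‖f' x - f' y‖ ^ 2
        ≤ α * f x + (1 - α) * f y := by
  intro x y α hα0 hα1
  set z := α • x + (1 - α) • y
  have hgap : α * (1 - α) * ‖f' x - f' y‖ ^ 2
      ≤ α * ‖f' z - f' x‖ ^ 2 + (1 - α) * ‖f' z - f' y‖ ^ 2 := by
    simpa only [sub_sub_sub_cancel_right, norm_sub_rev (f' z)] using
      mul_one_sub_mul_norm_sub_sq_le α (f' x - f' z) (f' y - f' z)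
  have hlin := mul_inner_sub_add_mul_inner_sub_eq_zero α (f' z) x y
  have hα1' : 0 ≤ 1 - α := sub_nonneg.mpr hα1
  calc f z + α * (1 - α) / (2 * L) * ‖f' x - f' y‖ ^ 2
      ≤ f z + (α * ‖f' z - f' x‖ ^ 2 + (1 - α) * ‖f' z - f' y‖ ^ 2) / (2 * L) := by
        rw [div_mul_eq_mul_div]
        gcongr
    _ = α * (f z + inner ℝ (f' z) (x - z) + 1 / (2 * L) * ‖f' z - f' x‖ ^ 2)
          + (1 - α) * (f z + inner ℝ (f' z) (y - z) + 1 / (2 * L) * ‖f' z - f' y‖ ^ 2) := by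
        linear_combination -hlin
    _ ≤ α * f x + (1 - α) * f y := by
        gcongr
        exacts [h2 z x, h2 z y]

theorem ineq2_implies_ineq5 (n : ℕ)
    (f : EuclideanSpace ℝ (Fin n) → ℝ) (f' : EuclideanSpace ℝ (Fin n) → EuclideanSpace ℝ (Fin n))
    (L : ℝ) (hL : 0 < L)
    (hdiff : ∀ x, HasGradientAt f (f' x) x)
    (h2 : ∀ x y, f x + inner ℝ (f' x) (y - x) + 1 / (2 * L) * ‖f' x - f' y‖ ^ 2 ≤ f y) :
    ∀ x y : EuclideanSpace ℝ (Fin n), ∀ α : ℝ, 0 ≤ α → α ≤ 1 →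
      f (α • x + (1 - α) • y) + α * (1 - α) / (2 * L) * ‖f' x - f' y‖ ^ 2
        ≤ α * f x + (1 - α) * f y :=
  ineq2_implies_ineq5_general n f f' L hL h2
end

section
/- Nesterov's equivalence theorem: let f : ℝⁿ → ℝ be convex and continuously differentiable with gradient f′ and let L > 0. Then the following are equivalent: (0) f′ is L-Lipschitz; (1) f(y) ≤ f(x) + ⟨f′(x), y-x⟩ + (L/2)‖x-y‖² for all x,y; (2) f(x) + ⟨f′(x), y-x⟩ + (1/(2L))‖f′(x)-f′(y)‖² ≤ f(y) for all x,y; (3) (1/L)‖f′(x)-f′(y)‖² ≤ ⟨f′(x)-f′(y), x-y⟩ for all x,y; (4) ⟨f′(x)-f′(y), x-y⟩ ≤ L‖x-y‖² for all x,y; (5) f(αx+(1-α)y) + (α(1-α)/(2L))‖f′(x)-f′(y)‖² ≤ αf(x)+(1-α)f(y) for all x,y and α∈[0,1]; (6) αf(x)+(1-α)f(y) ≤ f(αx+(1-α)y) + α(1-α)(L/2)‖x-y‖² for all x,y and α∈[0,1]. -/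
/-!
Writing (0)–(6) for the seven conditions, the cycle (0) → (4) → (1) → (2) → (3) → (0) is the
core. Cauchy–Schwarz gives (0) → (4) and (3) → (0). For (4) → (1), the bound (4) makes
`t ↦ f (x + t • v) - t ⟪f' x, v⟫ - L/2 t² ‖v‖²` antitone on `[0, 1]`. For (1) → (2), compare the
first-order convexity inequality at `x` with (1) at `y`, both evaluated at the point
`z = y - (f' y - f' x) / L`. Summing (2) at `(x, y)`
and `(y, x)` gives (3).

The convex-combination forms (5), (6) are the "integrated" versions of (2), (1): applying a
two-point inequality at `z = α x + (1 - α) y` towards `x` and `y` and averaging, the gradient terms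
cancel and `α ‖a‖² + (1 - α) ‖b‖² = ‖α a + (1 - α) b‖² + α (1 - α) ‖a - b‖²` produces the factor
`α (1 - α)`. Conversely, an inequality with remainder `t (1 - t) D` along the segment from `x` to
`y` yields the two-point inequality with remainder `D` by differentiating at `t = 0`; with `D = 0`
this is also the first-order characterisation of convexity.
-/

open Set Filter Topology RealInnerProductSpace

section

variable {E : Type*} [NormedAddCommGroup E] [InnerProductSpace ℝ E]
  {f : E → ℝ} {f' : E → E} {L : ℝ}

theorem mul_norm_sq_add_mul_norm_sq (α : ℝ) (a b : E) :
    α * ‖a‖ ^ 2 + (1 - α) * ‖b‖ ^ 2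
      = ‖α • a + (1 - α) • b‖ ^ 2 + α * (1 - α) * ‖a - b‖ ^ 2 := by
  rw [norm_add_sq_real, norm_sub_sq_real, norm_smul, norm_smul, real_inner_smul_left,
    real_inner_smul_right, mul_pow, mul_pow, Real.norm_eq_abs, Real.norm_eq_abs, sq_abs, sq_abs]
  ring

theorem mul_inner_sub_add_mul_inner_sub (α : ℝ) (g x y : E) :
    α * ⟪g, x - (α • x + (1 - α) • y)⟫ + (1 - α) * ⟪g, y - (α • x + (1 - α) • y)⟫ = 0 := by
  rw [← real_inner_smul_right, ← real_inner_smul_right, ← inner_add_right]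
  convert inner_zero_right g using 2
  module

theorem inner_le_mul_norm_sq_of_norm_le {a b : E} (h : ‖a‖ ≤ L * ‖b‖) :
    ⟪a, b⟫ ≤ L * ‖b‖ ^ 2 :=
  calc ⟪a, b⟫ ≤ ‖a‖ * ‖b‖ := real_inner_le_norm a b
    _ ≤ L * ‖b‖ * ‖b‖ := by gcongr
    _ = L * ‖b‖ ^ 2 := by ring

theorem norm_le_mul_norm_of_norm_sq_le_inner (hL : 0 < L) {a b : E}
    (h : 1 / L * ‖a‖ ^ 2 ≤ ⟪a, b⟫) : ‖a‖ ≤ L * ‖b‖ := by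
  rcases (norm_nonneg a).eq_or_lt with ha | ha
  · rw [← ha]
    positivity
  have : ‖a‖ * ‖a‖ ≤ L * ‖b‖ * ‖a‖ :=
    calc ‖a‖ * ‖a‖ = L * (1 / L * ‖a‖ ^ 2) := by field_simp
      _ ≤ L * (‖a‖ * ‖b‖) := mul_le_mul_of_nonneg_left (h.trans (real_inner_le_norm a b)) hL.le
      _ = L * ‖b‖ * ‖a‖ := by ring
  exact le_of_mul_le_mul_right this ha

theorem add_inner_add_norm_sq_le_of_le_add_inner_add (hL : L ≠ 0)
    (hconv : ∀ x y, f x + ⟪f' x, y - x⟫ ≤ f y)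
    (h : ∀ x y, f y ≤ f x + ⟪f' x, y - x⟫ + L / 2 * ‖x - y‖ ^ 2) (x y : E) :
    f x + ⟪f' x, y - x⟫ + 1 / (2 * L) * ‖f' x - f' y‖ ^ 2 ≤ f y := by
  set d := f' y - f' x
  set z := y - L⁻¹ • d
  have hx := hconv x z
  have hy := h y z
  rw [show z - x = (y - x) - L⁻¹ • d by module, inner_sub_right, real_inner_smul_right] at hx
  rw [show z - y = -(L⁻¹ • d) by module, show y - z = L⁻¹ • d by module, inner_neg_right,
    real_inner_smul_right, norm_smul, mul_pow, Real.norm_eq_abs, sq_abs] at hy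
  have hd : L⁻¹ * ⟪f' y, d⟫ - L⁻¹ * ⟪f' x, d⟫ = L⁻¹ * ‖d‖ ^ 2 := by
    rw [← mul_sub, ← inner_sub_left, real_inner_self_eq_norm_sq]
  have hscale : L / 2 * (L⁻¹ ^ 2 * ‖d‖ ^ 2) = L⁻¹ * ‖d‖ ^ 2 - 1 / (2 * L) * ‖d‖ ^ 2 := by
    field_simp
    ring
  rw [norm_sub_rev]
  linarith

theorem inv_mul_norm_sub_sq_le_inner_sub
    (h : ∀ x y, f x + ⟪f' x, y - x⟫ + 1 / (2 * L) * ‖f' x - f' y‖ ^ 2 ≤ f y) (x y : E) :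
    1 / L * ‖f' x - f' y‖ ^ 2 ≤ ⟪f' x - f' y, x - y⟫ := by
  have hxy := h x y
  have hyx := h y x
  rw [norm_sub_rev (f' y)] at hyx
  have hinner : ⟪f' x - f' y, x - y⟫ = -⟪f' x, y - x⟫ - ⟪f' y, x - y⟫ := by
    rw [inner_sub_left, ← inner_neg_right, neg_sub]
  rw [hinner]
  linear_combination hxy + hyx

theorem mul_add_mul_le_add_norm_sq_of_le_add_inner_add
    (h : ∀ x y, f y ≤ f x + ⟪f' x, y - x⟫ + L / 2 * ‖x - y‖ ^ 2)
    {α : ℝ} (hα₀ : 0 ≤ α) (hα₁ : α ≤ 1) (x y : E) :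
    α * f x + (1 - α) * f y
      ≤ f (α • x + (1 - α) • y) + α * (1 - α) * (L / 2) * ‖x - y‖ ^ 2 := by
  set z := α • x + (1 - α) • y
  have hx := mul_le_mul_of_nonneg_left (h z x) hα₀
  have hy := mul_le_mul_of_nonneg_left (h z y) (sub_nonneg.2 hα₁)
  have hinner := mul_inner_sub_add_mul_inner_sub α (f' z) x y
  have hnorm := mul_norm_sq_add_mul_norm_sq α (z - x) (z - y)
  rw [show α • (z - x) + (1 - α) • (z - y) = 0 by module, sub_sub_sub_cancel_left,
    norm_sub_rev y, norm_zero] at hnorm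
  linear_combination hx + hy + hinner + (L / 2) * hnorm

theorem add_mul_norm_sq_le_mul_add_mul_of_add_inner_add_le (hL : 0 ≤ L)
    (h : ∀ x y, f x + ⟪f' x, y - x⟫ + 1 / (2 * L) * ‖f' x - f' y‖ ^ 2 ≤ f y)
    {α : ℝ} (hα₀ : 0 ≤ α) (hα₁ : α ≤ 1) (x y : E) :
    f (α • x + (1 - α) • y) + α * (1 - α) / (2 * L) * ‖f' x - f' y‖ ^ 2
      ≤ α * f x + (1 - α) * f y := by
  set z := α • x + (1 - α) • y
  have hx := mul_le_mul_of_nonneg_left (h z x) hα₀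
  have hy := mul_le_mul_of_nonneg_left (h z y) (sub_nonneg.2 hα₁)
  have hinner := mul_inner_sub_add_mul_inner_sub α (f' z) x y
  have hnorm := mul_norm_sq_add_mul_norm_sq α (f' z - f' x) (f' z - f' y)
  rw [sub_sub_sub_cancel_left, norm_sub_rev (f' y)] at hnorm
  have hrest : 0 ≤ 1 / (2 * L) * ‖α • (f' z - f' x) + (1 - α) • (f' z - f' y)‖ ^ 2 := by
    positivity
  linear_combination hx + hy - hinner - 1 / (2 * L) * hnorm + hrest

variable [CompleteSpace E]

theorem HasGradientAt.neg {g x : E} (hf : HasGradientAt f g x) : HasGradientAt (-f) (-g) x := by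
  rw [hasGradientAt_iff_hasFDerivAt, map_neg]
  exact hf.hasFDerivAt.neg

theorem HasGradientAt.hasDerivAt_comp_add_smul {g x v : E} {t : ℝ}
    (hf : HasGradientAt f g (x + t • v)) :
    HasDerivAt (fun s : ℝ => f (x + s • v)) ⟪g, v⟫ t := by
  have hline : HasDerivAt (fun s : ℝ => x + s • v) v t := by
    simpa using ((hasDerivAt_id t).smul_const v).const_add x
  exact hf.hasFDerivAt.comp_hasDerivAt t hline

theorem HasGradientAt.add_inner_add_le {g x y : E} {D : ℝ} (hf : HasGradientAt f g x)
    (h : ∀ t ∈ Ioc (0 : ℝ) 1,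
      f (t • y + (1 - t) • x) + t * (1 - t) * D ≤ t * f y + (1 - t) * f x) :
    f x + ⟪g, y - x⟫ + D ≤ f y := by
  set φ : ℝ → ℝ := fun t => f (x + t • (y - x))
  have hφ : HasDerivAt φ ⟪g, y - x⟫ 0 :=
    HasGradientAt.hasDerivAt_comp_add_smul (by simpa using hf)
  have hbound : Tendsto (fun t : ℝ => f y - f x - (1 - t) * D) (𝓝[>] 0) (𝓝 (f y - f x - D)) :=
    tendsto_nhdsWithin_of_tendsto_nhds (Continuous.tendsto' (by fun_prop) 0 _ (by simp))
  have hslope : ⟪g, y - x⟫ ≤ f y - f x - D := by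
    refine le_of_tendsto_of_tendsto hφ.tendsto_slope_zero_right hbound ?_
    filter_upwards [Ioc_mem_nhdsGT (zero_lt_one' ℝ)] with t ht
    have hcomb := h t ht
    rw [show t • y + (1 - t) • x = x + t • (y - x) by module] at hcomb
    rw [smul_eq_mul, inv_mul_le_iff₀ ht.1]
    simp only [φ, zero_add, zero_smul, add_zero]
    nlinarith
  linarith

theorem ConvexOn.add_inner_le_of_hasGradientAt {g x : E} (hconv : ConvexOn ℝ univ f)
    (hf : HasGradientAt f g x) (y : E) : f x + ⟪g, y - x⟫ ≤ f y := by
  simpa using hf.add_inner_add_le (D := 0) fun t ht => by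
    simpa using hconv.2 (mem_univ y) (mem_univ x) ht.1.le (sub_nonneg.2 ht.2) (add_sub_cancel t 1)

theorem le_add_inner_add_of_inner_sub_le (hf : ∀ x, HasGradientAt f (f' x) x)
    (h : ∀ x y, ⟪f' x - f' y, x - y⟫ ≤ L * ‖x - y‖ ^ 2) (x y : E) :
    f y ≤ f x + ⟪f' x, y - x⟫ + L / 2 * ‖x - y‖ ^ 2 := by
  set v := y - x
  let φ : ℝ → ℝ := fun t => f (x + t • v) - t * ⟪f' x, v⟫ - L / 2 * t ^ 2 * ‖v‖ ^ 2
  have hφ : ∀ t, HasDerivAt φ (⟪f' (x + t • v), v⟫ - ⟪f' x, v⟫ - L * t * ‖v‖ ^ 2) t := by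
    intro t
    refine ((((hf _).hasDerivAt_comp_add_smul).sub ((hasDerivAt_id t).mul_const _)).sub
      (((hasDerivAt_pow 2 t).const_mul (L / 2)).mul_const (‖v‖ ^ 2))).congr_deriv ?_
    simp only [one_mul]
    ring
  have hφ'_nonpos : ∀ t ∈ interior (Icc (0 : ℝ) 1),
      ⟪f' (x + t • v), v⟫ - ⟪f' x, v⟫ - L * t * ‖v‖ ^ 2 ≤ 0 := by
    rw [interior_Icc]
    rintro t ⟨ht, -⟩
    have := h (x + t • v) x
    rw [add_sub_cancel_left, inner_smul_right, norm_smul, Real.norm_eq_abs, abs_of_pos ht] at this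
    rw [← inner_sub_left]
    nlinarith
  have hanti : AntitoneOn φ (Icc 0 1) :=
    antitoneOn_of_hasDerivWithinAt_nonpos (convex_Icc 0 1)
      (HasDerivAt.continuousOn fun t _ => hφ t) (fun t _ => (hφ t).hasDerivWithinAt) hφ'_nonpos
  have := hanti (left_mem_Icc.2 zero_le_one) (right_mem_Icc.2 zero_le_one) zero_le_one
  simp only [φ, v, one_smul, add_sub_cancel, zero_smul, add_zero] at this
  rw [norm_sub_rev]
  linarith

theorem le_add_inner_add_of_mul_add_mul_le (hf : ∀ x, HasGradientAt f (f' x) x)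
    (h : ∀ x y : E, ∀ α : ℝ, 0 ≤ α → α ≤ 1 →
      α * f x + (1 - α) * f y ≤ f (α • x + (1 - α) • y) + α * (1 - α) * (L / 2) * ‖x - y‖ ^ 2)
    (x y : E) : f y ≤ f x + ⟪f' x, y - x⟫ + L / 2 * ‖x - y‖ ^ 2 := by
  have := (hf x).neg.add_inner_add_le (y := y) (D := -(L / 2 * ‖x - y‖ ^ 2)) fun t ht => by
    have := h y x t ht.1.le ht.2
    rw [norm_sub_rev] at this
    simp only [Pi.neg_apply]
    linarith
  simp only [Pi.neg_apply, inner_neg_left] at this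
  linarith

theorem add_inner_add_le_of_add_mul_norm_sq_le (hf : ∀ x, HasGradientAt f (f' x) x)
    (h : ∀ x y : E, ∀ α : ℝ, 0 ≤ α → α ≤ 1 →
      f (α • x + (1 - α) • y) + α * (1 - α) / (2 * L) * ‖f' x - f' y‖ ^ 2
        ≤ α * f x + (1 - α) * f y)
    (x y : E) : f x + ⟪f' x, y - x⟫ + 1 / (2 * L) * ‖f' x - f' y‖ ^ 2 ≤ f y :=
  (hf x).add_inner_add_le fun t ht => by
    have := h y x t ht.1.le ht.2
    rw [norm_sub_rev] at this
    linear_combination this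

end

theorem nesterov_general (n : ℕ)
    (f : EuclideanSpace ℝ (Fin n) → ℝ) (f' : EuclideanSpace ℝ (Fin n) → EuclideanSpace ℝ (Fin n))
    (L : ℝ) (hL : 0 < L)
    (hdiff : ∀ x, HasGradientAt f (f' x) x)
    (hconv : ∀ x y : EuclideanSpace ℝ (Fin n), ∀ α : ℝ, 0 ≤ α → α ≤ 1 →
      f (α • x + (1 - α) • y) ≤ α * f x + (1 - α) * f y) :
    [ (∀ x y : EuclideanSpace ℝ (Fin n), ‖f' x - f' y‖ ≤ L * ‖x - y‖),
      (∀ x y : EuclideanSpace ℝ (Fin n),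
        f y ≤ f x + inner ℝ (f' x) (y - x) + L / 2 * ‖x - y‖ ^ 2),
      (∀ x y : EuclideanSpace ℝ (Fin n),
        f x + inner ℝ (f' x) (y - x) + 1 / (2 * L) * ‖f' x - f' y‖ ^ 2 ≤ f y),
      (∀ x y : EuclideanSpace ℝ (Fin n),
        1 / L * ‖f' x - f' y‖ ^ 2 ≤ inner ℝ (f' x - f' y) (x - y)),
      (∀ x y : EuclideanSpace ℝ (Fin n),
        inner ℝ (f' x - f' y) (x - y) ≤ L * ‖x - y‖ ^ 2),
      (∀ x y : EuclideanSpace ℝ (Fin n), ∀ α : ℝ, 0 ≤ α → α ≤ 1 →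
        f (α • x + (1 - α) • y) + α * (1 - α) / (2 * L) * ‖f' x - f' y‖ ^ 2
          ≤ α * f x + (1 - α) * f y),
      (∀ x y : EuclideanSpace ℝ (Fin n), ∀ α : ℝ, 0 ≤ α → α ≤ 1 →
        α * f x + (1 - α) * f y
          ≤ f (α • x + (1 - α) • y) + α * (1 - α) * (L / 2) * ‖x - y‖ ^ 2) ].TFAE := by
  have hconvOn : ConvexOn ℝ univ f := ⟨convex_univ, fun x _ y _ a b ha _ hab => by
    obtain rfl : b = 1 - a := by linarith
    exact hconv x y a ha (by linarith)⟩
  tfae_have 1 → 5 := fun h x y => inner_le_mul_norm_sq_of_norm_le (h x y)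
  tfae_have 5 → 2 := le_add_inner_add_of_inner_sub_le hdiff
  tfae_have 2 → 3 := add_inner_add_norm_sq_le_of_le_add_inner_add hL.ne'
    fun x => hconvOn.add_inner_le_of_hasGradientAt (hdiff x)
  tfae_have 3 → 4 := inv_mul_norm_sub_sq_le_inner_sub
  tfae_have 4 → 1 := fun h x y => norm_le_mul_norm_of_norm_sq_le_inner hL (h x y)
  tfae_have 2 → 7 := fun h x y _ hα₀ hα₁ =>
    mul_add_mul_le_add_norm_sq_of_le_add_inner_add h hα₀ hα₁ x y
  tfae_have 7 → 2 := le_add_inner_add_of_mul_add_mul_le hdiff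
  tfae_have 3 → 6 := fun h x y _ hα₀ hα₁ =>
    add_mul_norm_sq_le_mul_add_mul_of_add_inner_add_le hL.le h hα₀ hα₁ x y
  tfae_have 6 → 3 := add_inner_add_le_of_add_mul_norm_sq_le hdiff
  tfae_finish

theorem nesterov (n : ℕ)
    (f : EuclideanSpace ℝ (Fin n) → ℝ) (f' : EuclideanSpace ℝ (Fin n) → EuclideanSpace ℝ (Fin n))
    (L : ℝ) (hL : 0 < L)
    (hdiff : ∀ x, HasGradientAt f (f' x) x)
    (hcont : Continuous f') (hfcont : Continuous f)
    (hconv : ∀ x y : EuclideanSpace ℝ (Fin n), ∀ α : ℝ, 0 ≤ α → α ≤ 1 →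
      f (α • x + (1 - α) • y) ≤ α * f x + (1 - α) * f y) :
    [ (∀ x y : EuclideanSpace ℝ (Fin n), ‖f' x - f' y‖ ≤ L * ‖x - y‖),
      (∀ x y : EuclideanSpace ℝ (Fin n),
        f y ≤ f x + inner ℝ (f' x) (y - x) + L / 2 * ‖x - y‖ ^ 2),
      (∀ x y : EuclideanSpace ℝ (Fin n),
        f x + inner ℝ (f' x) (y - x) + 1 / (2 * L) * ‖f' x - f' y‖ ^ 2 ≤ f y),
      (∀ x y : EuclideanSpace ℝ (Fin n),
        1 / L * ‖f' x - f' y‖ ^ 2 ≤ inner ℝ (f' x - f' y) (x - y)),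
      (∀ x y : EuclideanSpace ℝ (Fin n),
        inner ℝ (f' x - f' y) (x - y) ≤ L * ‖x - y‖ ^ 2),
      (∀ x y : EuclideanSpace ℝ (Fin n), ∀ α : ℝ, 0 ≤ α → α ≤ 1 →
        f (α • x + (1 - α) • y) + α * (1 - α) / (2 * L) * ‖f' x - f' y‖ ^ 2
          ≤ α * f x + (1 - α) * f y),
      (∀ x y : EuclideanSpace ℝ (Fin n), ∀ α : ℝ, 0 ≤ α → α ≤ 1 →
        α * f x + (1 - α) * f y
          ≤ f (α • x + (1 - α) • y) + α * (1 - α) * (L / 2) * ‖x - y‖ ^ 2) ].TFAE :=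
  nesterov_general n f f' L hL hdiff hconv
end
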